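/- In every PMV_f-algebra A, the product distributes over the lattice operations: for all a, b, c ∈ A, a·(b ∧ c) = a·b ∧ a·c and a·(b ∨ c) = a·b ∨ a·c. -/

import Mathlib

/-!
Since `b ∧ c = b ⊖ (b ⊖ c)` and `b ∨ c = (b ⊖ c) ⊕ c`, any map between MV-algebras that preserves
`⊖` preserves `∧` outright; it is also monotone, so `f (b ∨ c) = (f (b ∨ c) ⊖ f c) ⊕ f c`, and
`(b ∨ c) ⊖ c = b ⊖ c` turns this into `f b ∨ f c`. In a `PMV_f`-algebra each `x ↦ a·x` is such a map.
-/

/-- The data of an MV-algebra: a binary sum, a negation and a zero. -/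
structure MVData (A : Type*) where
  add : A → A → A
  neg : A → A
  zero : A

namespace MVData

variable {A : Type*} (m : MVData A)

/-- The top element `u = ¬0`. -/
def unit : A := m.neg m.zero

/-- Truncated difference `x ⊖ y = ¬(¬x ⊕ y)`. -/
def ominus (x y : A) : A := m.neg (m.add (m.neg x) y)

/-- The product `x ⊙ y = ¬(¬x ⊕ ¬y)`. -/
def odot (x y : A) : A := m.neg (m.add (m.neg x) (m.neg y))

/-- The MV order: `x ≤ y` iff `x ⊖ y = 0`. -/
def le (x y : A) : Prop := m.ominus x y = m.zero

/-- The lattice join `x ∨ y = (x ⊖ y) ⊕ y`. -/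
def sup (x y : A) : A := m.add (m.ominus x y) y

/-- The lattice meet `x ∧ y = ¬(¬x ∨ ¬y)`. -/
def inf (x y : A) : A := m.neg (m.sup (m.neg x) (m.neg y))

/-- The MV-algebra axioms: `(A, ⊕, 0)` is a commutative monoid and `¬` satisfies
`¬¬x = x`, `x ⊕ ¬0 = ¬0` and `¬(¬x ⊕ y) ⊕ y = ¬(¬y ⊕ x) ⊕ x`. -/
structure IsMV : Prop where
  add_assoc : ∀ x y z : A, m.add (m.add x y) z = m.add x (m.add y z)
  add_comm : ∀ x y : A, m.add x y = m.add y x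
  add_zero : ∀ x : A, m.add x m.zero = x
  neg_neg : ∀ x : A, m.neg (m.neg x) = x
  add_unit : ∀ x : A, m.add x (m.neg m.zero) = m.neg m.zero
  lukasiewicz : ∀ x y : A,
    m.add (m.neg (m.add (m.neg x) y)) y = m.add (m.neg (m.add (m.neg y) x)) x

end MVData

namespace MVData.IsMV

variable {A : Type*} {m : MVData A}

theorem zero_add (h : m.IsMV) (x : A) : m.add m.zero x = x := by
  rw [h.add_comm, h.add_zero]

theorem neg_add_self (h : m.IsMV) (x : A) : m.add (m.neg x) x = m.neg m.zero := by
  have hx := h.lukasiewicz x (m.neg m.zero)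
  rw [h.add_unit, h.neg_neg, h.zero_add] at hx
  exact hx.symm

theorem ominus_self (h : m.IsMV) (x : A) : m.ominus x x = m.zero := by
  rw [MVData.ominus, h.neg_add_self, h.neg_neg]

theorem sup_comm (h : m.IsMV) (x y : A) : m.sup x y = m.sup y x :=
  h.lukasiewicz x y

theorem sup_of_le (h : m.IsMV) {x y : A} (hyx : m.le y x) : m.sup x y = x := by
  rw [h.sup_comm, MVData.sup, hyx, h.zero_add]

theorem le_add_left (h : m.IsMV) (x y : A) : m.le y (m.add x y) := by
  rw [MVData.le, MVData.ominus, h.add_comm x y, ← h.add_assoc, h.neg_add_self, h.add_comm,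
    h.add_unit, h.neg_neg]

theorem le_sup_right (h : m.IsMV) (x y : A) : m.le y (m.sup x y) :=
  h.le_add_left _ y

theorem add_ominus_cancel_of_le_neg (h : m.IsMV) {a y : A} (hy : m.le y (m.neg a)) :
    m.ominus (m.add a y) y = a := by
  -- `¬(a ⊕ y) ⊕ y` is `¬a ∨ y`, which is `¬a`
  have hsup : m.sup (m.neg a) y = m.neg a := h.sup_of_le hy
  rw [MVData.sup, MVData.ominus, h.neg_neg] at hsup
  rw [MVData.ominus, hsup, h.neg_neg]

theorem sup_ominus_right (h : m.IsMV) (x y : A) : m.ominus (m.sup x y) y = m.ominus x y := by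
  refine h.add_ominus_cancel_of_le_neg ?_
  rw [MVData.ominus, h.neg_neg]
  exact h.le_add_left _ y

theorem inf_eq_ominus_ominus (h : m.IsMV) (x y : A) : m.inf x y = m.ominus x (m.ominus x y) := by
  have hl := h.lukasiewicz (m.neg x) (m.neg y)
  simp only [h.neg_neg] at hl
  simp only [MVData.inf, MVData.sup, MVData.ominus, h.neg_neg]
  rw [hl, h.add_comm y (m.neg x), h.add_comm (m.neg (m.add (m.neg x) y)) (m.neg x)]

end MVData.IsMV

section OminusPreserving

variable {A B : Type*} {m : MVData A} {n : MVData B}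

theorem map_zero_of_map_ominus (hm : m.IsMV) (hn : n.IsMV) {f : A → B}
    (hf : ∀ x y, f (m.ominus x y) = n.ominus (f x) (f y)) : f m.zero = n.zero := by
  rw [← hm.ominus_self m.zero, hf, hn.ominus_self]

theorem map_le_of_map_ominus (hm : m.IsMV) (hn : n.IsMV) {f : A → B}
    (hf : ∀ x y, f (m.ominus x y) = n.ominus (f x) (f y)) {x y : A} (hxy : m.le x y) :
    n.le (f x) (f y) := by
  rw [MVData.le, ← hf, hxy, map_zero_of_map_ominus hm hn hf]

theorem map_inf_of_map_ominus (hm : m.IsMV) (hn : n.IsMV) {f : A → B}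
    (hf : ∀ x y, f (m.ominus x y) = n.ominus (f x) (f y)) (x y : A) :
    f (m.inf x y) = n.inf (f x) (f y) := by
  rw [hm.inf_eq_ominus_ominus, hf, hf, hn.inf_eq_ominus_ominus]

theorem map_sup_of_map_ominus (hm : m.IsMV) (hn : n.IsMV) {f : A → B}
    (hf : ∀ x y, f (m.ominus x y) = n.ominus (f x) (f y)) (x y : A) :
    f (m.sup x y) = n.sup (f x) (f y) :=
  calc f (m.sup x y) = n.sup (f (m.sup x y)) (f y) :=
        (hn.sup_of_le (map_le_of_map_ominus hm hn hf (hm.le_sup_right x y))).symm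
    _ = n.add (f (m.ominus (m.sup x y) y)) (f y) := by rw [MVData.sup, hf]
    _ = n.sup (f x) (f y) := by rw [hm.sup_ominus_right, hf]; rfl

end OminusPreserving

theorem pmvf_mul_distrib_lattice_general {A : Type*} (m : MVData A) (hmv : m.IsMV)
    (mul : A → A → A)
    (mul_ominus : ∀ a b c : A, mul a (m.ominus b c) = m.ominus (mul a b) (mul a c)) :
    ∀ a b c : A,
      mul a (m.inf b c) = m.inf (mul a b) (mul a c) ∧
      mul a (m.sup b c) = m.sup (mul a b) (mul a c) :=
  fun a b c =>
    ⟨map_inf_of_map_ominus hmv hmv (mul_ominus a) b c,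
      map_sup_of_map_ominus hmv hmv (mul_ominus a) b c⟩

/-- In every `PMV_f`-algebra the product distributes over the lattice
operations: `a·(b ∧ c) = a·b ∧ a·c` and `a·(b ∨ c) = a·b ∨ a·c`. -/
theorem pmvf_mul_distrib_lattice {A : Type*} (m : MVData A) (hmv : m.IsMV)
    (mul : A → A → A)
    (mul_assoc : ∀ a b c : A, mul (mul a b) c = mul a (mul b c))
    (mul_comm : ∀ a b : A, mul a b = mul b a)
    (mul_zero : ∀ a : A, mul a m.zero = m.zero)
    (mul_add_le : ∀ a b c : A, m.le (mul a (m.add b c)) (m.add (mul a b) (mul a c)))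
    (ominus_mul_le : ∀ a b c : A,
      m.le (m.ominus (mul a b) (mul a c)) (mul a (m.ominus b c)))
    (mul_le_inf : ∀ a b : A, m.le (mul a b) (m.inf a b))
    (mul_ominus : ∀ a b c : A, mul a (m.ominus b c) = m.ominus (mul a b) (mul a c)) :
    ∀ a b c : A,
      mul a (m.inf b c) = m.inf (mul a b) (mul a c) ∧
      mul a (m.sup b c) = m.sup (mul a b) (mul a c) :=
  pmvf_mul_distrib_lattice_general m hmv mul mul_ominus
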